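/- Let V be a finite-dimensional complex vector space and g a linear automorphism of V of finite order. Then ι(g) + ι(g⁻¹) = dim_ℂ V − dim_ℂ ker(g − id), i.e. the degree shifting numbers of g and of its inverse add up to the complex codimension of the fixed subspace of g in V. -/

import Mathlib

/-! A linear automorphism `g` of finite order is diagonalizable and its eigenvalues are roots of
unity; moreover the `μ`-eigenspace of `g⁻¹` is the `μ⁻¹`-eigenspace of `g`. Hence
`ι(g) + ι(g⁻¹)` weighs each eigenspace `E_μ(g)` by `θ(μ) + θ(μ⁻¹)`, which is `0` for `μ = 1` and
`1` for every other root of unity, since then `θ(μ⁻¹) = 1 - θ(μ)`. The eigenspaces of `g` with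
`μ ≠ 1` therefore contribute their total dimension, `dim V - dim E_1(g)`. -/

/-- Degree shifting number of a linear automorphism of a complex vector space:
the sum over eigenvalues λ = e^{2πiθ}, θ ∈ [0,1), of θ times the complex dimension
of the corresponding eigenspace. -/
noncomputable def iota {V : Type*} [AddCommGroup V] [Module ℂ V] (g : V ≃ₗ[ℂ] V) : ℝ :=
  ∑ᶠ μ : ℂ, Int.fract (Complex.arg μ / (2 * Real.pi)) *
    (Module.finrank ℂ (Module.End.eigenspace (g : V →ₗ[ℂ] V) μ) : ℝ)

open Module Complex Polynomial

theorem Int.fract_add_fract_neg {R : Type*} [Ring R] [LinearOrder R] [IsOrderedRing R]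
    [FloorRing R] (x : R) : fract x + fract (-x) = if fract x = 0 then 0 else 1 := by
  split_ifs with hx
  · rw [hx, fract_neg_eq_zero.mpr hx, add_zero]
  · rw [fract_neg hx, add_sub_cancel]

theorem Complex.fract_arg_add_fract_arg_inv (μ : ℂ) :
    Int.fract (arg μ / (2 * Real.pi)) + Int.fract (arg μ⁻¹ / (2 * Real.pi)) =
      if arg μ = 0 then 0 else 1 := by
  have hπ := Real.pi_pos
  rw [arg_inv]
  split_ifs with hpi h0 h0
  · exact absurd (hpi.symm.trans h0) hπ.ne'
  · have half : Real.pi / (2 * Real.pi) = 1 / 2 := by field_simp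
    rw [hpi, half, Int.fract_eq_self.mpr (by norm_num)]
    norm_num
  · simp [h0]
  · have hθ : |arg μ / (2 * Real.pi)| < 1 := by
      rw [abs_div, abs_of_pos (by positivity : 0 < 2 * Real.pi), div_lt_iff₀ (by positivity),
        abs_lt]
      constructor <;> linarith [neg_pi_lt_arg μ, arg_le_pi μ]
    rw [neg_div, Int.fract_add_fract_neg, if_neg]
    rw [Int.fract_eq_zero_iff]
    rintro ⟨n, hn⟩
    rw [← hn] at hθ
    have hn0 : n = 0 := Int.abs_lt_one_iff.mp (by exact_mod_cast hθ)
    rw [hn0, Int.cast_zero, eq_comm, div_eq_zero_iff] at hn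
    exact h0 (hn.resolve_right (by positivity))

theorem Complex.arg_eq_zero_iff_of_norm_eq_one {μ : ℂ} (hμ : ‖μ‖ = 1) : arg μ = 0 ↔ μ = 1 := by
  refine ⟨fun h => ?_, fun h => h ▸ arg_one⟩
  simpa [hμ, h] using (norm_mul_exp_arg_mul_I μ).symm

theorem Complex.fract_arg_add_fract_arg_inv_of_isOfFinOrder {μ : ℂ} (hμ : IsOfFinOrder μ) :
    Int.fract (arg μ / (2 * Real.pi)) + Int.fract (arg μ⁻¹ / (2 * Real.pi)) =
      if μ = 1 then 0 else 1 := by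
  simp only [fract_arg_add_fract_arg_inv, arg_eq_zero_iff_of_norm_eq_one hμ.norm_eq_one]

namespace Module.End

variable {K V : Type*} [Field K] [AddCommGroup V] [Module K V]

theorem isSemisimple_of_isOfFinOrder [CharZero K] {f : End K V} (hf : IsOfFinOrder f) :
    f.IsSemisimple := by
  obtain ⟨n, hn, hfn⟩ := isOfFinOrder_iff_pow_eq_one.mp hf
  refine isSemisimple_of_squarefree_aeval_eq_zero
    (X_pow_sub_one_separable_iff.mpr (Nat.cast_ne_zero.mpr hn.ne')).squarefree ?_
  simp [hfn]

theorem HasEigenvalue.isOfFinOrder {f : End K V} {μ : K} (hμ : f.HasEigenvalue μ)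
    (hf : IsOfFinOrder f) : IsOfFinOrder μ := by
  obtain ⟨n, hn, hfn⟩ := isOfFinOrder_iff_pow_eq_one.mp hf
  obtain ⟨v, hv⟩ := hμ.exists_hasEigenvector
  refine isOfFinOrder_iff_pow_eq_one.mpr ⟨n, hn, smul_left_injective K hv.2 ?_⟩
  simpa [hfn] using (hv.pow_apply n).symm

theorem eigenspace_one_eq_ker (f : End K V) :
    f.eigenspace 1 = LinearMap.ker (f - LinearMap.id) := by
  rw [eigenspace_def, one_smul]
  rfl

theorem eigenspace_inv (g : V ≃ₗ[K] V) (μ : K) :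
    eigenspace ((g⁻¹ : V ≃ₗ[K] V) : End K V) μ = eigenspace (g : End K V) μ⁻¹ := by
  ext x
  simp only [mem_eigenspace_iff, LinearEquiv.coe_coe, LinearEquiv.coe_inv,
    LinearEquiv.symm_apply_eq, map_smul]
  rcases eq_or_ne μ 0 with rfl | hμ
  · simp only [zero_smul, inv_zero]
    exact g.map_eq_zero_iff.symm
  · rw [eq_comm, ← eq_inv_smul_iff₀ hμ]

theorem support_finrank_eigenspace [FiniteDimensional K V] (f : End K V) :
    Function.support (fun μ => finrank K (f.eigenspace μ)) = {μ | f.HasEigenvalue μ} := by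
  ext μ
  simp [hasEigenvalue_iff]

theorem hasFiniteSupport_finrank_eigenspace [FiniteDimensional K V] (f : End K V) :
    Function.HasFiniteSupport fun μ => finrank K (f.eigenspace μ) := by
  rw [Function.HasFiniteSupport, support_finrank_eigenspace]
  exact f.finite_hasEigenvalue

theorem finrank_eq_finsum_finrank_eigenspace [FiniteDimensional K V] {f : End K V}
    (h : ⨆ μ, f.eigenspace μ = ⊤) : finrank K V = ∑ᶠ μ, finrank K (f.eigenspace μ) := by
  classical
  set s := f.finite_hasEigenvalue.toFinset
  have hint : DirectSum.IsInternal fun μ : s => f.eigenspace μ := by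
    refine DirectSum.isInternal_submodule_of_iSupIndep_of_iSup_eq_top
      (f.eigenspaces_iSupIndep.comp Subtype.val_injective)
      (eq_top_iff.mpr (h ▸ iSup_le fun μ => ?_))
    by_cases hμ : μ ∈ s
    · exact le_iSup_of_le (⟨μ, hμ⟩ : s) le_rfl
    · simp_all [s, hasEigenvalue_iff]
  rw [← (LinearEquiv.ofBijective (DirectSum.coeLinearMap _) hint).finrank_eq, finrank_directSum,
    Finset.sum_coe_sort s fun μ => finrank K (f.eigenspace μ), finsum_eq_sum_of_support_subset]
  simp [s, support_finrank_eigenspace]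

end Module.End

theorem iota_inv {V : Type*} [AddCommGroup V] [Module ℂ V] (g : V ≃ₗ[ℂ] V) :
    iota g⁻¹ = ∑ᶠ μ : ℂ, Int.fract (arg μ⁻¹ / (2 * Real.pi)) *
      (finrank ℂ (End.eigenspace (g : End ℂ V) μ) : ℝ) := by
  rw [iota, ← finsum_comp_equiv (Equiv.inv ℂ)]
  refine finsum_congr fun μ => ?_
  rw [Equiv.inv_apply, End.eigenspace_inv, inv_inv]

theorem iota_add_iota_inv_eq_finsum {V : Type*} [AddCommGroup V] [Module ℂ V]
    [FiniteDimensional ℂ V] (g : V ≃ₗ[ℂ] V) :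
    iota g + iota g⁻¹ = ∑ᶠ μ : ℂ,
      (Int.fract (arg μ / (2 * Real.pi)) + Int.fract (arg μ⁻¹ / (2 * Real.pi))) *
        (finrank ℂ (End.eigenspace (g : End ℂ V) μ) : ℝ) := by
  have hd := (End.hasFiniteSupport_finrank_eigenspace (g : End ℂ V)).fun_comp
    (g := ((↑) : ℕ → ℝ)) Nat.cast_zero
  have h1 : Function.HasFiniteSupport fun μ : ℂ => Int.fract (arg μ / (2 * Real.pi)) *
      (finrank ℂ (End.eigenspace (g : End ℂ V) μ) : ℝ) := hd.mul_right _
  have h2 : Function.HasFiniteSupport fun μ : ℂ => Int.fract (arg μ⁻¹ / (2 * Real.pi)) *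
      (finrank ℂ (End.eigenspace (g : End ℂ V) μ) : ℝ) := hd.mul_right _
  simp_rw [add_mul]
  rw [iota, iota_inv, finsum_add_distrib h1 h2]

theorem iota_add_iota_inv {V : Type*} [AddCommGroup V] [Module ℂ V]
    [FiniteDimensional ℂ V] (g : V ≃ₗ[ℂ] V) (hg : IsOfFinOrder g) :
    iota g + iota g⁻¹ =
      (Module.finrank ℂ V : ℝ) -
        (Module.finrank ℂ (LinearMap.ker ((g : V →ₗ[ℂ] V) - LinearMap.id)) : ℝ) := by
  set f : End ℂ V := (g : V →ₗ[ℂ] V)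
  have hf : IsOfFinOrder f := LinearEquiv.automorphismGroup.toLinearMapMonoidHom.isOfFinOrder hg
  set d : ℂ → ℝ := fun μ => finrank ℂ (f.eigenspace μ)
  have hd : Function.HasFiniteSupport d :=
    f.hasFiniteSupport_finrank_eigenspace.fun_comp (g := ((↑) : ℕ → ℝ)) Nat.cast_zero
  have hweight (μ : ℂ) :
      (Int.fract (arg μ / (2 * Real.pi)) + Int.fract (arg μ⁻¹ / (2 * Real.pi))) * d μ =
        ∑ᶠ (_ : μ ≠ 1), d μ := by
    rw [finsum_eq_if]
    by_cases hμ : f.HasEigenvalue μ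
    · rw [fract_arg_add_fract_arg_inv_of_isOfFinOrder (hμ.isOfFinOrder hf)]
      split_ifs <;> simp_all
    · rw [End.hasEigenvalue_iff, not_not, ← Submodule.finrank_eq_zero] at hμ
      simp [d, hμ]
  have hdim : (finrank ℂ V : ℝ) = d 1 + ∑ᶠ (μ) (_ : μ ≠ 1), d μ := by
    rw [add_finsum_cond_ne 1 hd, End.finrank_eq_finsum_finrank_eigenspace
      (End.isSemisimple_of_isOfFinOrder hf).iSup_eigenspace_eq_top]
    exact (Nat.castAddMonoidHom ℝ).map_finsum f.hasFiniteSupport_finrank_eigenspace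
  rw [iota_add_iota_inv_eq_finsum, finsum_congr hweight, hdim, ← f.eigenspace_one_eq_ker]
  ring
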